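/- Let H be a k-uniform hypergraph, s ≥ 1 and r ≥ ks integers, and let H^r_s be the generalized power hypergraph of H. A real number λ > r − ks is a signless Laplacian eigenvalue of H^r_s if and only if there is a signless Laplacian eigenvalue μ > 0 of H with λ = s(μ − k) + r. -/

import Mathlib

open Matrix BigOperators Finset

variable {V : Type*} [Fintype V] [DecidableEq V]

/-- Incidence matrix of a hypergraph with vertex set `W` and edge set `E`. -/
def inc {W : Type*} [DecidableEq W] (E : Finset (Finset W)) : Matrix W {e // e ∈ E} ℝ :=
  fun v e => if v ∈ (e : Finset W) then 1 else 0

/-- Signless Laplacian matrix `Q = B·Bᵀ`. -/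
def Qmat {W : Type*} [Fintype W] [DecidableEq W] (E : Finset (Finset W)) :
    Matrix W W ℝ := inc E * (inc E)ᵀ

/-- Edge set of the generalized power hypergraph `H^r_s`: each vertex `v` is
blown up into the set `{v} × Fin s` and each edge `e` receives `r - k*s`
additional new vertices indexed by `e`. -/
def powerEdges (E : Finset (Finset V)) (k s r : ℕ) :
    Finset (Finset (V × Fin s ⊕ {e // e ∈ E} × Fin (r - k * s))) :=
  E.attach.image fun (e : {x // x ∈ E}) =>
    ((e.1 ×ˢ (Finset.univ : Finset (Fin s))).image Sum.inl) ∪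
      ((Finset.univ : Finset (Fin (r - k * s))).image fun j => Sum.inr (e, j))

/-- The blown-up edge. -/
def blow (E : Finset (Finset V)) (k s r : ℕ) (e : {x // x ∈ E}) :
    Finset (V × Fin s ⊕ {e // e ∈ E} × Fin (r - k * s)) :=
  ((e.1 ×ˢ (Finset.univ : Finset (Fin s))).image Sum.inl) ∪
    ((Finset.univ : Finset (Fin (r - k * s))).image fun j => Sum.inr (e, j))

lemma powerEdges_eq (E : Finset (Finset V)) (k s r : ℕ) :
    powerEdges E k s r = E.attach.image (blow E k s r) := rfl

lemma mem_blow_inl (E : Finset (Finset V)) (k s r : ℕ) (e : {x // x ∈ E})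
    (v : V) (i : Fin s) : Sum.inl (v, i) ∈ blow E k s r e ↔ v ∈ e.1 := by
  simp [blow]

lemma mem_blow_inr (E : Finset (Finset V)) (k s r : ℕ) (e g : {x // x ∈ E})
    (j : Fin (r - k * s)) : Sum.inr (g, j) ∈ blow E k s r e ↔ g = e := by
  simp [blow, eq_comm]

lemma eig_shift {W E : Type*} [Fintype W] [Fintype E] (A : Matrix W E ℝ) (C : Matrix E W ℝ)
    (lam : ℝ) (hlam : lam ≠ 0) (x : W → ℝ) (hx : x ≠ 0) (h : (A * C) *ᵥ x = lam • x) :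
    (C *ᵥ x) ≠ 0 ∧ (C * A) *ᵥ (C *ᵥ x) = lam • (C *ᵥ x) := by
  have h1 : A *ᵥ (C *ᵥ x) = lam • x := by rwa [mulVec_mulVec]
  constructor
  · intro h0
    rw [h0, mulVec_zero] at h1
    exact smul_ne_zero hlam hx h1.symm
  · rw [← mulVec_mulVec, h1, mulVec_smul]

lemma eig_transpose_iff {W E : Type*} [Fintype W] [Fintype E] (B : Matrix W E ℝ)
    (lam : ℝ) (hlam : lam ≠ 0) :
    (∃ x ≠ 0, (B * Bᵀ) *ᵥ x = lam • x) ↔ ∃ y ≠ 0, (Bᵀ * B) *ᵥ y = lam • y := by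
  constructor
  · rintro ⟨x, hx, h⟩
    obtain ⟨h1, h2⟩ := eig_shift B Bᵀ lam hlam x hx h
    exact ⟨_, h1, h2⟩
  · rintro ⟨y, hy, h⟩
    obtain ⟨h1, h2⟩ := eig_shift Bᵀ B lam hlam y hy h
    exact ⟨_, h1, h2⟩

lemma eig_submatrix {C D : Type*} [Fintype C] [Fintype D] (M : Matrix D D ℝ) (φ : C ≃ D)
    (lam : ℝ) :
    (∃ x ≠ 0, M *ᵥ x = lam • x) ↔ ∃ z ≠ 0, (M.submatrix φ φ) *ᵥ z = lam • z := by
  constructor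
  · rintro ⟨x, hx, h⟩
    refine ⟨x ∘ φ, ?_, ?_⟩
    · intro h0
      apply hx
      funext d
      have : (x ∘ φ) (φ.symm d) = 0 := by rw [h0]; rfl
      simpa using this
    · rw [submatrix_mulVec_equiv]
      have : (x ∘ φ) ∘ φ.symm = x := by funext d; simp
      rw [this, h]
      rfl
  · rintro ⟨z, hz, h⟩
    refine ⟨z ∘ φ.symm, ?_, ?_⟩
    · intro h0
      apply hz
      funext c
      have : (z ∘ φ.symm) (φ c) = 0 := by rw [h0]; rfl
      simpa using this
    · rw [submatrix_mulVec_equiv] at h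
      have h2 : (z ∘ φ.symm) ∘ φ = z := by funext c; simp
      have h3 := congrArg (fun w => w ∘ φ.symm) h
      have h4 : ((M *ᵥ (z ∘ φ.symm)) ∘ φ) ∘ φ.symm = M *ᵥ (z ∘ φ.symm) := by
        funext d; simp
      rw [h4] at h3
      rw [h3]
      funext d
      simp [Pi.smul_apply]

lemma eig_affine {C : Type*} [Fintype C] [DecidableEq C] (G : Matrix C C ℝ)
    (a b lam : ℝ) (ha : a ≠ 0) (z : C → ℝ) :
    (a • G + b • (1 : Matrix C C ℝ)) *ᵥ z = lam • z ↔ G *ᵥ z = ((lam - b) / a) • z := by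
  rw [add_mulVec, smul_mulVec, smul_mulVec, one_mulVec]
  constructor
  · intro h
    have h1 : a • (G *ᵥ z) = (lam - b) • z := by
      rw [sub_smul]
      exact eq_sub_of_add_eq h
    calc G *ᵥ z = a⁻¹ • (a • (G *ᵥ z)) := (inv_smul_smul₀ ha _).symm
      _ = a⁻¹ • ((lam - b) • z) := by rw [h1]
      _ = ((lam - b) / a) • z := by rw [smul_smul]; ring_nf
  · intro h
    rw [h, smul_smul, show a * ((lam - b) / a) = lam - b by field_simp, sub_smul]
    abel

lemma gram_apply {W : Type*} [Fintype W] [DecidableEq W] (E : Finset (Finset W))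
    (e f : {x // x ∈ E}) :
    ((inc E)ᵀ * inc E) e f = ((e.1 ∩ f.1).card : ℝ) := by
  rw [Matrix.mul_apply]
  have key : ∀ v : W, (inc E)ᵀ e v * inc E v f = if v ∈ e.1 ∩ f.1 then (1 : ℝ) else 0 := by
    intro v
    by_cases h1 : v ∈ e.1 <;> by_cases h2 : v ∈ f.1 <;>
      simp [inc, Matrix.transpose_apply, h1, h2, Finset.mem_inter]
  simp_rw [key]
  rw [Finset.sum_boole]
  congr 1
  rw [Finset.filter_mem_eq_inter, Finset.univ_inter]

theorem power_hypergraph_eigenvalues (k s r : ℕ) (E : Finset (Finset V))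
    (hk : ∀ e ∈ E, e.card = k) (hs : 1 ≤ s) (hr : k * s ≤ r)
    (lam : ℝ) (hlam : (r : ℝ) - (k : ℝ) * (s : ℝ) < lam) :
    (∃ x ≠ 0, Qmat (powerEdges E k s r) *ᵥ x = lam • x) ↔
      ∃ μ : ℝ, 0 < μ ∧ (∃ y ≠ 0, Qmat E *ᵥ y = μ • y) ∧
        lam = (s : ℝ) * (μ - (k : ℝ)) + (r : ℝ) := by
  -- constants
  set c : ℝ := ((r - k * s : ℕ) : ℝ) with hc
  have hcval : c = (r : ℝ) - (k : ℝ) * (s : ℝ) := by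
    rw [hc, Nat.cast_sub hr]; push_cast; ring
  have hc0 : 0 ≤ c := by positivity
  have hlamc : c < lam := by rw [hcval]; exact hlam
  have hlam0 : lam ≠ 0 := by linarith
  have hsR : (0 : ℝ) < s := by exact_mod_cast hs
  -- the equivalence between edges and blown-up edges
  have hinj : Function.Injective (blow E k s r) := by
    intro e f hef
    apply Subtype.ext
    ext v
    rw [← mem_blow_inl E k s r e v ⟨0, hs⟩, hef, mem_blow_inl]
  have hsurj : ∀ d : {d // d ∈ powerEdges E k s r}, ∃ e, blow E k s r e = d.1 := by
    rintro ⟨d, hd⟩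
    rw [powerEdges_eq, Finset.mem_image] at hd
    obtain ⟨e, _, he⟩ := hd
    exact ⟨e, he⟩
  let ψ : {x // x ∈ E} → {d // d ∈ powerEdges E k s r} := fun e =>
    ⟨blow E k s r e, by
      rw [powerEdges_eq]; exact Finset.mem_image_of_mem _ (Finset.mem_attach _ _)⟩
  have hψbij : Function.Bijective ψ := by
    constructor
    · intro e f hef
      exact hinj (congrArg Subtype.val hef)
    · intro d
      obtain ⟨e, he⟩ := hsurj d
      exact ⟨e, Subtype.ext he⟩
  let φ : {x // x ∈ E} ≃ {d // d ∈ powerEdges E k s r} := Equiv.ofBijective ψ hψbij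
  -- the power gram matrix
  have hgram : ((inc (powerEdges E k s r))ᵀ * inc (powerEdges E k s r)).submatrix φ φ =
      (s : ℝ) • ((inc E)ᵀ * inc E) + c • (1 : Matrix {x // x ∈ E} {x // x ∈ E} ℝ) := by
    ext e f
    rw [Matrix.submatrix_apply, Matrix.mul_apply]
    have hφ : ∀ g : {x // x ∈ E}, ((φ g : {d // d ∈ powerEdges E k s r}) : Finset _) =
        blow E k s r g := fun g => rfl
    have key : ∀ w, (inc (powerEdges E k s r))ᵀ (φ e) w * inc (powerEdges E k s r) w (φ f) =
        if w ∈ blow E k s r e ∧ w ∈ blow E k s r f then (1 : ℝ) else 0 := by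
      intro w
      by_cases h1 : w ∈ blow E k s r e <;> by_cases h2 : w ∈ blow E k s r f <;>
        simp [inc, Matrix.transpose_apply, hφ, h1, h2]
    simp_rw [key]
    rw [Fintype.sum_sum_type]
    have hleft : (∑ p : V × Fin s, if Sum.inl p ∈ blow E k s r e ∧
        Sum.inl p ∈ blow E k s r f then (1 : ℝ) else 0) =
        (s : ℝ) * ((inc E)ᵀ * inc E) e f := by
      rw [_root_.gram_apply]
      rw [Fintype.sum_prod_type]
      have : ∀ v : V, (∑ i : Fin s, if Sum.inl (v, i) ∈ blow E k s r e ∧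
          Sum.inl (v, i) ∈ blow E k s r f then (1 : ℝ) else 0) =
          (s : ℝ) * (if v ∈ e.1 ∩ f.1 then (1 : ℝ) else 0) := by
        intro v
        simp_rw [mem_blow_inl, ← Finset.mem_inter]
        rw [Finset.sum_const, Finset.card_univ, Fintype.card_fin, nsmul_eq_mul]
      simp_rw [this]
      rw [← Finset.mul_sum, Finset.sum_boole]
      congr 2
      rw [Finset.filter_mem_eq_inter, Finset.univ_inter]
    have hright : (∑ p : {x // x ∈ E} × Fin (r - k * s), if Sum.inr p ∈ blow E k s r e ∧
        Sum.inr p ∈ blow E k s r f then (1 : ℝ) else 0) =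
        c * (if e = f then (1 : ℝ) else 0) := by
      rw [Fintype.sum_prod_type]
      have : ∀ g : {x // x ∈ E}, (∑ j : Fin (r - k * s),
          if Sum.inr (g, j) ∈ blow E k s r e ∧ Sum.inr (g, j) ∈ blow E k s r f
          then (1 : ℝ) else 0) = c * (if g = e ∧ g = f then 1 else 0) := by
        intro g
        simp_rw [mem_blow_inr]
        by_cases hg : g = e ∧ g = f <;>
          simp [hg, hc, Finset.sum_const, Finset.card_univ]
      simp_rw [this, ← Finset.mul_sum, ite_and]
      congr 1
      rw [Finset.sum_ite_eq']
      simp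
    rw [hleft, hright, Matrix.add_apply, Matrix.smul_apply, Matrix.smul_apply,
      Matrix.one_apply, smul_eq_mul, smul_eq_mul]
  -- assemble
  set μ₀ : ℝ := (lam - c) / (s : ℝ) with hμ₀
  have hμ₀pos : 0 < μ₀ := div_pos (by linarith) hsR
  have hQpow : Qmat (powerEdges E k s r) =
      inc (powerEdges E k s r) * (inc (powerEdges E k s r))ᵀ := rfl
  have hQ : Qmat E = inc E * (inc E)ᵀ := rfl
  rw [hQpow, eig_transpose_iff _ lam hlam0, eig_submatrix _ φ, hgram]
  constructor
  · rintro ⟨z, hz, hzeq⟩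
    rw [eig_affine _ _ _ _ (ne_of_gt hsR)] at hzeq
    refine ⟨μ₀, hμ₀pos, ?_, ?_⟩
    · rw [hQ, eig_transpose_iff _ μ₀ (ne_of_gt hμ₀pos)]
      exact ⟨z, hz, hzeq⟩
    · rw [hμ₀]
      field_simp
      rw [hcval]
      ring
  · rintro ⟨μ, hμpos, hy, hlameq⟩
    have hμeq : μ = μ₀ := by
      rw [hμ₀, hcval]
      field_simp
      linarith [hlameq]
    rw [hQ, eig_transpose_iff _ μ (ne_of_gt hμpos)] at hy
    obtain ⟨z, hz, hzeq⟩ := hy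
    refine ⟨z, hz, ?_⟩
    rw [eig_affine _ _ _ _ (ne_of_gt hsR)]
    rw [← hμ₀, ← hμeq]
    exact hzeq
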